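/- Let n ≥ 2 and let A be the intersection matrix of C_n (diagonal (-(n+2), -2, ..., -2), off-diagonal neighbors 1). Then A is negative definite. -/
import Mathlib


open Matrix Finset

private theorem Cn_aux (m : ℕ) (hm1 : 1 ≤ m) (c : ℝ) (hc : 0 < c)
    (A : Matrix (Fin m) (Fin m) ℝ)
    (hA : A = fun i j =>
      if i = j then (if i.val = 0 then -c - 2 else -2)
      else if i.val + 1 = j.val ∨ j.val + 1 = i.val then 1 else 0)
    (x : Fin m → ℝ) (hx : x ≠ 0) : x ⬝ᵥ A.mulVec x < 0 := by
  subst hA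
  set A : Matrix (Fin m) (Fin m) ℝ := fun i j =>
    if i = j then (if i.val = 0 then -c - 2 else -2)
    else if i.val + 1 = j.val ∨ j.val + 1 = i.val then 1 else 0 with hA
  set y : ℕ → ℝ := fun i => if h : i < m then x ⟨i, h⟩ else 0 with hy
  have hym : y m = 0 := by simp [hy]
  have hyx : ∀ i : Fin m, y i.val = x i := by
    intro i; simp [hy, i.isLt]
  have sumy : ∀ k : ℕ, (∑ j : Fin m, (if j.val = k then x j else 0)) = y k := by
    intro k
    by_cases hk : k < m
    · have h1 : ∀ j : Fin m, (j.val = k) ↔ (j = ⟨k, hk⟩) := by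
        intro j; simp [Fin.ext_iff]
      simp_rw [h1]
      simp [hy, hk]
    · have h1 : ∀ j : Fin m, ¬ (j.val = k) := by
        intro j hj; exact hk (hj ▸ j.isLt)
      simp [h1, hy, hk]
  have hrow : ∀ i : Fin m, (A.mulVec x) i
      = (if i.val = 0 then -c - 2 else -2) * x i + y (i.val + 1)
        + (if i.val = 0 then 0 else y (i.val - 1)) := by
    intro i
    have key : ∀ j : Fin m, A i j * x j =
        (if j = i then (if i.val = 0 then -c - 2 else -2) * x j else 0)
        + (if j.val = i.val + 1 then x j else 0)
        + (if i.val = j.val + 1 then x j else 0) := by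
      intro j
      rw [hA]
      simp only [Fin.ext_iff]
      split_ifs <;> first | (exfalso; omega) | ring1
    have h2 : (A.mulVec x) i = ∑ j : Fin m, A i j * x j := by
      simp [mulVec, dotProduct]
    rw [h2, Finset.sum_congr rfl (fun j _ => key j)]
    rw [Finset.sum_add_distrib, Finset.sum_add_distrib]
    congr 1
    · congr 1
      · rw [Finset.sum_ite_eq' Finset.univ i
          (fun j => (if i.val = 0 then -c - 2 else -2) * x j)]
        simp
      · exact sumy (i.val + 1)
    · by_cases hi : i.val = 0
      · have h1 : ∀ j : Fin m, ¬ (i.val = j.val + 1) := by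
          intro j; omega
        simp [hi, h1]
      · have h1 : ∀ j : Fin m, (i.val = j.val + 1) ↔ (j.val = i.val - 1) := by
          intro j; omega
        simp_rw [h1]
        rw [sumy (i.val - 1), if_neg hi]
  have hQ : x ⬝ᵥ A.mulVec x
      = ∑ i ∈ Finset.range m, (y i * ((if i = 0 then -c - 2 else -2) * y i
          + y (i + 1)) + (if i = 0 then 0 else y i * y (i - 1))) := by
    rw [dotProduct, ← Fin.sum_univ_eq_sum_range]
    refine Finset.sum_congr rfl fun i _ => ?_
    rw [hrow i, hyx i]
    by_cases hi : i.val = 0 <;> simp [hi] <;> ring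
  have hshift : (∑ i ∈ Finset.range m, (if i = 0 then (0:ℝ) else y i * y (i - 1)))
      = ∑ i ∈ Finset.range m, y i * y (i + 1) := by
    obtain ⟨m', rfl⟩ : ∃ m', m = m' + 1 := ⟨m - 1, by omega⟩
    rw [Finset.sum_range_succ' (fun i => if i = 0 then (0:ℝ) else y i * y (i - 1)),
      Finset.sum_range_succ (fun i => y i * y (i + 1))]
    simp only [Nat.succ_ne_zero, if_neg, Nat.add_sub_cancel, if_pos, hym]
    simp [mul_comm]
  have hmain : x ⬝ᵥ A.mulVec x
      = -c * (y 0)^2 - (y 0)^2 - ∑ i ∈ Finset.range m, (y i - y (i + 1))^2 := by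
    rw [hQ, Finset.sum_add_distrib, hshift, ← Finset.sum_add_distrib]
    have expand : ∀ i ∈ Finset.range m,
        (y i * ((if i = 0 then -c - 2 else -2) * y i + y (i + 1)) + y i * y (i + 1))
        = (-(y i - y (i + 1))^2) + ((y (i + 1))^2 - (y i)^2)
          + (if i = 0 then -c * (y 0)^2 else 0) := by
      intro i _
      by_cases hi : i = 0 <;> simp [hi] <;> ring
    rw [Finset.sum_congr rfl expand, Finset.sum_add_distrib, Finset.sum_add_distrib]
    rw [Finset.sum_range_sub (fun i => (y i)^2), hym]
    have h0 : (∑ i ∈ Finset.range m, (if i = 0 then -c * (y 0)^2 else 0))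
        = -c * (y 0)^2 := by
      rw [Finset.sum_ite_eq' (Finset.range m) 0 (fun _ => -c * (y 0)^2),
        if_pos (Finset.mem_range.mpr (by omega))]
    rw [h0, Finset.sum_neg_distrib]
    ring
  have hsq : ∀ i ∈ Finset.range m, (0:ℝ) ≤ (y i - y (i + 1))^2 :=
    fun i _ => sq_nonneg _
  have hsum_nonneg : (0:ℝ) ≤ ∑ i ∈ Finset.range m, (y i - y (i + 1))^2 :=
    Finset.sum_nonneg hsq
  by_contra hcon
  push_neg at hcon
  rw [hmain] at hcon
  have hy0sq : (y 0)^2 = 0 := by nlinarith [sq_nonneg (y 0)]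
  have hy0 : y 0 = 0 := by
    have := pow_eq_zero_iff (n := 2) (by norm_num) |>.mp hy0sq
    exact this
  have hsum0 : ∑ i ∈ Finset.range m, (y i - y (i + 1))^2 = 0 := by
    rw [hy0] at hcon
    norm_num at hcon
    linarith
  have hdiff : ∀ i ∈ Finset.range m, (y i - y (i + 1))^2 = 0 :=
    (Finset.sum_eq_zero_iff_of_nonneg hsq).mp hsum0
  have hstep : ∀ i, i < m → y (i + 1) = y i := by
    intro i hi
    have h3 := hdiff i (Finset.mem_range.mpr hi)
    have h4 := pow_eq_zero_iff (n := 2) (by norm_num) |>.mp h3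
    linarith
  have hall : ∀ i, y i = 0 := by
    intro i
    induction i with
    | zero => exact hy0
    | succ k ih =>
      by_cases hk : k < m
      · rw [hstep k hk, ih]
      · have h5 : ¬ (k + 1 < m) := by omega
        simp [hy, h5]
  apply hx
  funext j
  have h6 := hall j.val
  rw [hyx j] at h6
  simpa using h6

/-- The intersection matrix of the linear plumbing `C_n`, with diagonal
`(-(n+2), -2, …, -2)` and off-diagonal neighboring entries `1`, is negative
definite as a real quadratic form. -/
theorem Cn_intersection_form_negDef (n : ℕ) (hn : 2 ≤ n)
    (A : Matrix (Fin (n - 1)) (Fin (n - 1)) ℝ)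
    (hA : A = fun i j =>
      if i = j then (if i.val = 0 then -(n : ℝ) - 2 else -2)
      else if i.val + 1 = j.val ∨ j.val + 1 = i.val then 1 else 0) :
    ∀ x : Fin (n - 1) → ℝ, x ≠ 0 → x ⬝ᵥ A.mulVec x < 0 := by
  intro x hx
  exact Cn_aux (n - 1) (by omega) (n : ℝ) (by positivity) A (by rw [hA]) x hx
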